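/- In the random model, let δ := 1/(2n²mφ) and let B_1(r,δ) := {r̃ ∈ ℝ^m : ‖r − r̃‖_1 ≤ δ} denote the closed ℓ_1-ball. Then with probability at least 1 − 1/n there exists a directed cycle C of G such that B_1(r,δ) ⊆ P^C. -/

import Mathlib

/-!
Call an edge `e` critical for weights `r` if some optimal cycle avoids `e` while some cycle
through `e` has mean weight within `2δ` of the optimum. If no edge is critical, the optimal cycle
beats every other cycle by more than `2δ` (another cycle always has an edge outside it), and as
mean weights are `1`-Lipschitz for the `ℓ₁`-norm the whole `δ`-ball stays in its cell. With the
other weights fixed, raising `r_e` by `t` raises the mean weight of each cycle through `e` by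
`t / |C| ≥ t / n` and leaves the other cycles alone, so the values of `r_e` making `e` critical
form a set of diameter at most `2δn`, of probability at most `2δnφ` by independence and the
density bound. A union bound over the `m` edges gives `2δnmφ = 1/n`.
-/

open MeasureTheory

/-- The `k`-th edge of the closed walk determined by the list of vertices `c`
(from the `k`-th vertex to the next one, cyclically). -/
def cycleEdge {n : ℕ} (c : List (Fin n)) (k : Fin c.length) : Fin n × Fin n :=
  (c.get k, c.get ⟨(k.1 + 1) % c.length, Nat.mod_lt _ (Nat.lt_of_le_of_lt (Nat.zero_le _) k.isLt)⟩)

/-- `C ⊆ E` is the edge set of a simple directed cycle of the graph `([n], E)`. -/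
def IsCycle {n : ℕ} (E : Finset (Fin n × Fin n)) (C : Finset {e : Fin n × Fin n // e ∈ E}) :
    Prop :=
  ∃ (c : List (Fin n)) (h : ∀ k : Fin c.length, cycleEdge c k ∈ E),
    0 < c.length ∧ c.Nodup ∧
      C = Finset.image (fun k => (⟨cycleEdge c k, h k⟩ : {e : Fin n × Fin n // e ∈ E}))
            Finset.univ

/-- Mean weight of a set of edges. -/
noncomputable def meanWeight {n : ℕ} {E : Finset (Fin n × Fin n)}
    (r : {e : Fin n × Fin n // e ∈ E} → ℝ) (C : Finset {e : Fin n × Fin n // e ∈ E}) : ℝ :=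
  (∑ e ∈ C, r e) / C.card

/-- `C` is an optimal (minimum mean weight) cycle of the DMDP with weights `r`. -/
def IsOptCycle {n : ℕ} (E : Finset (Fin n × Fin n)) (r : {e : Fin n × Fin n // e ∈ E} → ℝ)
    (C : Finset {e : Fin n × Fin n // e ∈ E}) : Prop :=
  IsCycle E C ∧ ∀ C', IsCycle E C' → meanWeight r C ≤ meanWeight r C'

/-- `P^C`: the set of weight vectors for which `C` is the unique optimal cycle. -/
def Pcell {n : ℕ} (E : Finset (Fin n × Fin n)) (C : Finset {e : Fin n × Fin n // e ∈ E}) :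
    Set ({e : Fin n × Fin n // e ∈ E} → ℝ) :=
  {r | IsOptCycle E r C ∧ ∀ C', IsOptCycle E r C' → C' = C}

/-- `U := ∪_C P^C`. -/
def Ucell {n : ℕ} (E : Finset (Fin n × Fin n)) : Set ({e : Fin n × Fin n // e ∈ E} → ℝ) :=
  ⋃ C, Pcell E C

/-- The directed graph `([n], E)` is strongly connected. -/
def StronglyConnected {n : ℕ} (E : Finset (Fin n × Fin n)) : Prop :=
  ∀ i j : Fin n, Relation.ReflTransGen (fun a b => (a, b) ∈ E) i j

open Finset Function

theorem Function.Periodic.forall_of_succ {P : ℕ → Prop} {L : ℕ} (hL : 0 < L)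
    (hP : Periodic P L) {k₀ : ℕ} (h₀ : P k₀) (hsucc : ∀ k, P k → P (k + 1)) (k : ℕ) : P k := by
  have h : P (k + k₀ * L) :=
    Nat.le_induction (P := fun j _ => P j) h₀ (fun j _ => hsucc j) _ (by nlinarith)
  simpa using (hP.nat_mul k₀ k).mp h

theorem Function.exists_mem_periodicPts {α : Type*} [Finite α] [Nonempty α] (f : α → α) :
    ∃ x, x ∈ periodicPts f := by
  obtain ⟨a, b, hab, heq⟩ := Finite.exists_ne_map_eq_of_infinite (f^[·] (Classical.arbitrary α))
  wlog hlt : a < b generalizing a b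
  · exact this b a hab.symm heq.symm (by omega)
  refine ⟨_, mk_mem_periodicPts (Nat.sub_pos_of_lt hlt) (x := f^[a] (Classical.arbitrary α)) ?_⟩
  rw [IsPeriodicPt, IsFixedPt, ← iterate_add_apply, Nat.sub_add_cancel hlt.le]
  exact heq.symm

theorem card_image_cycleEdge {n : ℕ} {E : Finset (Fin n × Fin n)} {c : List (Fin n)}
    (hnd : c.Nodup) (h : ∀ k, cycleEdge c k ∈ E) :
    (univ.image fun k => (⟨cycleEdge c k, h k⟩ : E)).card = c.length := by
  rw [card_image_of_injective _ fun k k' hkk => List.nodup_iff_injective_get.mp hnd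
    (congrArg (fun p : E => p.1.1) hkk), card_univ, Fintype.card_fin]

namespace IsCycle

variable {n : ℕ} {E : Finset (Fin n × Fin n)} {C C' : Finset E}

theorem card_pos (hC : IsCycle E C) : 0 < C.card := by
  obtain ⟨c, h, hlen, hnd, rfl⟩ := hC
  rwa [card_image_cycleEdge hnd]

theorem card_le (hC : IsCycle E C) : C.card ≤ n := by
  obtain ⟨c, h, -, hnd, rfl⟩ := hC
  simpa [card_image_cycleEdge hnd] using hnd.length_le_card

theorem exists_fst_eq_snd (hC : IsCycle E C) {p : E} (hp : p ∈ C) : ∃ q ∈ C, q.1.1 = p.1.2 := by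
  obtain ⟨c, h, hlen, -, rfl⟩ := hC
  obtain ⟨k, -, rfl⟩ := mem_image.mp hp
  exact ⟨_, mem_image_of_mem _ (mem_univ ⟨(k.1 + 1) % c.length, Nat.mod_lt _ hlen⟩), rfl⟩

theorem eq_of_fst_eq (hC : IsCycle E C) {p q : E} (hp : p ∈ C) (hq : q ∈ C)
    (hfst : p.1.1 = q.1.1) : p = q := by
  obtain ⟨c, h, -, hnd, rfl⟩ := hC
  obtain ⟨k, -, rfl⟩ := mem_image.mp hp
  obtain ⟨k', -, rfl⟩ := mem_image.mp hq
  rw [List.nodup_iff_injective_get.mp hnd hfst]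

theorem eq_of_subset (hC : IsCycle E C) (hC' : IsCycle E C') (hsub : C ⊆ C') : C = C' := by
  obtain ⟨c, h, hlen, hnd, rfl⟩ := id hC'
  let vtx (k : ℕ) : Fin n := c.get ⟨k % c.length, Nat.mod_lt _ hlen⟩
  -- `C` is closed under successors, so walking around `C'` every vertex is a source in `C`
  have hsrc : ∀ k, ∃ p ∈ C, p.1.1 = vtx k := by
    obtain ⟨p₀, hp₀⟩ := Finset.card_pos.mp hC.card_pos
    obtain ⟨k₀, -, hk₀⟩ := mem_image.mp (hsub hp₀)
    refine Periodic.forall_of_succ hlen (fun k => by simp only [vtx, Nat.add_mod_right])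
      (k₀ := k₀) ⟨p₀, hp₀, by simp [vtx, ← hk₀, Nat.mod_eq_of_lt k₀.isLt, cycleEdge]⟩ ?_
    rintro k ⟨p, hp, hpk⟩
    obtain ⟨q, hq, hqp⟩ := hC.exists_fst_eq_snd hp
    refine ⟨q, hq, ?_⟩
    rw [hqp, hC'.eq_of_fst_eq (hsub hp)
      (mem_image_of_mem _ (mem_univ (⟨k % c.length, Nat.mod_lt _ hlen⟩ : Fin c.length))) hpk]
    simp [vtx, cycleEdge, Nat.add_mod]
  refine Subset.antisymm hsub fun q hq => ?_
  obtain ⟨k, -, rfl⟩ := mem_image.mp hq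
  obtain ⟨p, hp, hpk⟩ := hsrc k
  have : p = ⟨cycleEdge c k, h k⟩ :=
    hC'.eq_of_fst_eq (hsub hp) hq (by simpa [vtx, cycleEdge, Nat.mod_eq_of_lt k.isLt] using hpk)
  exact this ▸ hp

end IsCycle

theorem exists_isCycle {n : ℕ} {E : Finset (Fin n × Fin n)} (hn : 0 < n)
    (hout : ∀ i : Fin n, ∃ j : Fin n, (i, j) ∈ E) : ∃ C : Finset E, IsCycle E C := by
  choose g hg using hout
  have : Nonempty (Fin n) := ⟨⟨0, hn⟩⟩
  obtain ⟨y, hy⟩ := exists_mem_periodicPts g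
  let c : List (Fin n) := (List.range (minimalPeriod g y)).map (g^[·] y)
  have hlen : c.length = minimalPeriod g y := by simp [c]
  have hedge (k : Fin c.length) : cycleEdge c k ∈ E := by
    convert hg (g^[k] y) using 2
    · simp [cycleEdge, c]
    · simp [cycleEdge, c, iterate_mod_minimalPeriod_eq, iterate_succ_apply']
  refine ⟨_, c, hedge, hlen ▸ minimalPeriod_pos_of_mem_periodicPts hy, ?_, rfl⟩
  exact Cycle.nodup_coe_iff.mp (nodup_periodicOrbit (f := g) (x := y))

section MeanWeight

variable {n : ℕ} {E : Finset (Fin n × Fin n)} {C : Finset E} {δ : ℝ}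

theorem meanWeight_update_of_notMem {e : E} (he : e ∉ C) (r : E → ℝ) (t : ℝ) :
    meanWeight (update r e t) C = meanWeight r C := by
  unfold meanWeight
  congr 1
  exact sum_congr rfl fun a ha => update_of_ne (ne_of_mem_of_not_mem ha he) _ _

theorem meanWeight_update_of_mem {e : E} (he : e ∈ C) (r : E → ℝ) (t : ℝ) :
    meanWeight (update r e t) C = meanWeight r C + (t - r e) / C.card := by
  unfold meanWeight
  rw [sum_update_of_mem he, sdiff_singleton_eq_erase, sum_erase_eq_sub he]
  ring

theorem abs_meanWeight_sub_le (hC : C.Nonempty) (r r' : E → ℝ) :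
    |meanWeight r C - meanWeight r' C| ≤ ∑ e, |r e - r' e| := by
  unfold meanWeight
  rw [div_sub_div_same, ← sum_sub_distrib, abs_div, Nat.abs_cast]
  calc |∑ e ∈ C, (r e - r' e)| / C.card ≤ |∑ e ∈ C, (r e - r' e)| :=
        div_le_self (abs_nonneg _) (by exact_mod_cast hC.card_pos)
    _ ≤ ∑ e ∈ C, |r e - r' e| := abs_sum_le_sum_abs _ _
    _ ≤ ∑ e, |r e - r' e| :=
      sum_le_sum_of_subset_of_nonneg (subset_univ C) fun _ _ _ => abs_nonneg _

theorem exists_isOptCycle (hex : ∃ C, IsCycle E C) (r : E → ℝ) : ∃ C, IsOptCycle E r C := by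
  classical
  obtain ⟨C, hC, hmin⟩ := exists_min_image {D | IsCycle E D} (meanWeight r ·)
    (by simpa [Finset.Nonempty] using hex)
  exact ⟨C, by simpa using hC, fun D hD => hmin D (by simpa using hD)⟩

theorem mem_Pcell_of_gap (hC : IsCycle E C) {r r' : E → ℝ}
    (hgap : ∀ C', IsCycle E C' → C' ≠ C → meanWeight r C + 2 * δ < meanWeight r C')
    (hr' : ∑ e, |r e - r' e| ≤ δ) : r' ∈ Pcell E C := by
  have hlt : ∀ C', IsCycle E C' → C' ≠ C → meanWeight r' C < meanWeight r' C' := by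
    intro C' hC' hne
    have h := (abs_meanWeight_sub_le (card_pos.mp hC.card_pos) r r').trans hr'
    have h' := (abs_meanWeight_sub_le (card_pos.mp hC'.card_pos) r r').trans hr'
    rw [abs_le] at h h'
    linarith [hgap C' hC' hne]
  refine ⟨⟨hC, fun D hD => ?_⟩, fun D hD => ?_⟩
  · rcases eq_or_ne D C with rfl | hne
    · rfl
    · exact (hlt D hD hne).le
  · by_contra hne
    exact (hlt D hD.1 hne).not_ge (hD.2 C hC)

variable (E) in
def IsCriticalEdge (δ : ℝ) (e : E) (r : E → ℝ) : Prop :=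
  ∃ C C' : Finset E, IsOptCycle E r C ∧ e ∉ C ∧ IsCycle E C' ∧ e ∈ C' ∧
    meanWeight r C' ≤ meanWeight r C + 2 * δ

theorem exists_forall_mem_Pcell_of_forall_not_isCriticalEdge (hex : ∃ C, IsCycle E C) {r : E → ℝ}
    (hr : ∀ e, ¬ IsCriticalEdge E δ e r) :
    ∃ C, IsCycle E C ∧ ∀ r', ∑ e, |r e - r' e| ≤ δ → r' ∈ Pcell E C := by
  obtain ⟨C, hopt⟩ := exists_isOptCycle hex r
  refine ⟨C, hopt.1, fun r' => mem_Pcell_of_gap hopt.1 fun C' hC' hne => ?_⟩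
  by_contra! hle
  obtain ⟨e, heC', heC⟩ : ∃ e ∈ C', e ∉ C := by
    by_contra! hsub
    exact hne (hC'.eq_of_subset hopt.1 hsub)
  exact hr e ⟨C, C', hopt, heC, hC', heC', hle⟩

theorem sub_le_of_isCriticalEdge_update (hδ : 0 ≤ δ) {e : E} {r : E → ℝ} {s₁ s₂ : ℝ}
    (h₁ : IsCriticalEdge E δ e (update r e s₁)) (h₂ : IsCriticalEdge E δ e (update r e s₂)) :
    s₂ - s₁ ≤ 2 * δ * n := by
  obtain ⟨C₁, -, hopt₁, he₁, -⟩ := h₁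
  obtain ⟨C₂, C₂', hopt₂, he₂, hC₂', he₂', hle₂⟩ := h₂
  have hcard : (0 : ℝ) < C₂'.card := by exact_mod_cast hC₂'.card_pos
  have hcard_le : (C₂'.card : ℝ) ≤ n := by exact_mod_cast hC₂'.card_le
  have hopt₁' := hopt₁.2 C₂' hC₂'
  have hopt₂' := hopt₂.2 C₁ hopt₁.1
  rw [meanWeight_update_of_notMem he₁, meanWeight_update_of_mem he₂'] at hopt₁'
  rw [meanWeight_update_of_notMem he₂, meanWeight_update_of_notMem he₁] at hopt₂'
  rw [meanWeight_update_of_notMem he₂, meanWeight_update_of_mem he₂'] at hle₂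
  have : (s₂ - s₁) / C₂'.card ≤ 2 * δ := by
    have : (s₂ - r e) / C₂'.card - (s₁ - r e) / C₂'.card = (s₂ - s₁) / C₂'.card := by ring
    linarith
  calc s₂ - s₁ ≤ 2 * δ * C₂'.card := (div_le_iff₀ hcard).mp this
    _ ≤ 2 * δ * n := by gcongr

theorem ediam_setOf_isCriticalEdge_update_le (hδ : 0 ≤ δ) (e : E) (r : E → ℝ) :
    Metric.ediam {t | IsCriticalEdge E δ e (update r e t)} ≤ ENNReal.ofReal (2 * δ * n) :=
  Metric.ediam_le fun s₁ h₁ s₂ h₂ => by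
    rw [edist_dist, Real.dist_eq]
    exact ENNReal.ofReal_le_ofReal (abs_sub_le_iff.mpr
      ⟨sub_le_of_isCriticalEdge_update hδ h₂ h₁, sub_le_of_isCriticalEdge_update hδ h₁ h₂⟩)

theorem measurableSet_isCriticalEdge (δ : ℝ) (e : E) :
    MeasurableSet {r | IsCriticalEdge E δ e r} := by
  have hmeas (C : Finset E) : Measurable fun r : E → ℝ => meanWeight r C := by
    unfold meanWeight; fun_prop
  simp only [IsCriticalEdge, IsOptCycle, Set.ofPred_exists, Set.ofPred_and, Set.ofPred_forall]
  measurability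

end MeanWeight

section Probability

open ProbabilityTheory
open scoped ENNReal

theorem withDensity_apply_le_mul_ediam {f : ℝ → ℝ≥0∞} {c : ℝ≥0∞} (hf : ∀ y, f y ≤ c)
    (s : Set ℝ) : volume.withDensity f s ≤ c * Metric.ediam s :=
  calc volume.withDensity f s = ∫⁻ y in s, f y := withDensity_apply' f s
    _ ≤ ∫⁻ _ in s, c := lintegral_mono hf
    _ = c * volume s := setLIntegral_const s c
    _ ≤ c * Metric.ediam s := by gcongr; exact Real.volume_le_diam s

theorem MeasureTheory.Measure.pi_le_of_forall_update_le {ι : Type*} [Fintype ι] [DecidableEq ι]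
    {X : ι → Type*} [∀ i, MeasurableSpace (X i)] {ν : ∀ i, Measure (X i)}
    [∀ i, IsProbabilityMeasure (ν i)] {S : Set (∀ i, X i)} (hS : MeasurableSet S) (i : ι)
    {b : ℝ≥0∞} (hb : ∀ x, ν i {t | update x i t ∈ S} ≤ b) : Measure.pi ν S ≤ b := by
  have x₀ : ∀ j, X j := fun j => (nonempty_of_isProbabilityMeasure (ν j)).some
  have hind : Measurable (S.indicator (1 : (∀ j, X j) → ℝ≥0∞)) := measurable_one.indicator hS
  calc Measure.pi ν S = ∫⁻ x, S.indicator 1 x ∂Measure.pi ν := (lintegral_indicator_one hS).symm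
    _ = (∫⋯∫⁻_univ.erase i, fun x => ∫⁻ t, S.indicator 1 (update x i t) ∂ν i ∂ν) x₀ := by
      rw [lintegral_eq_lmarginal_univ x₀, lmarginal_erase' _ hind (mem_univ i)]
    _ ≤ (∫⋯∫⁻_univ.erase i, fun _ => b ∂ν) x₀ := by
      refine lmarginal_mono (fun x => ?_) x₀
      calc ∫⁻ t, S.indicator 1 (update x i t) ∂ν i = ν i (update x i ⁻¹' S) := by
            rw [← lintegral_indicator_one (measurable_update x hS)]; rfl
        _ ≤ b := hb x
    _ = b := by simp [lmarginal]

theorem measure_preimage_le_of_density_le_of_ediam_le {ι Ω : Type*} [Fintype ι] [DecidableEq ι]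
    [MeasurableSpace Ω] {μ : Measure Ω} [IsProbabilityMeasure μ] {X : Ω → ι → ℝ}
    (hmeas : ∀ i, Measurable fun ω => X ω i) (hindep : iIndepFun (fun i ω => X ω i) μ)
    {i : ι} {f : ℝ → ℝ≥0∞} (hdens : μ.map (fun ω => X ω i) = volume.withDensity f)
    {c : ℝ≥0∞} (hf : ∀ y, f y ≤ c) {S : Set (ι → ℝ)} (hS : MeasurableSet S) {L : ℝ≥0∞}
    (hL : ∀ x, Metric.ediam {t | update x i t ∈ S} ≤ L) : μ (X ⁻¹' S) ≤ c * L := by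
  have : ∀ j, IsProbabilityMeasure (μ.map fun ω => X ω j) := fun j =>
    Measure.isProbabilityMeasure_map (hmeas j).aemeasurable
  calc μ (X ⁻¹' S) = μ.map X S := (Measure.map_apply (measurable_pi_lambda _ hmeas) hS).symm
    _ = Measure.pi (fun j => μ.map fun ω => X ω j) S := by
      rw [hindep.map_fun_eq_pi_map fun j => (hmeas j).aemeasurable]
    _ ≤ c * L := Measure.pi_le_of_forall_update_le hS i fun x => by
      rw [hdens]
      exact (withDensity_apply_le_mul_ediam hf _).trans (by gcongr; exact hL x)

end Probability

open ProbabilityTheory in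
theorem stmt3_general (n : ℕ) (hn : 0 < n) (E : Finset (Fin n × Fin n))
    (hout : ∀ i : Fin n, ∃ j : Fin n, (i, j) ∈ E)
    (φ : ℝ) (hφ : 0 < φ)
    (Ω : Type*) [MeasurableSpace Ω] (μ : Measure Ω) [IsProbabilityMeasure μ]
    (X : Ω → {e : Fin n × Fin n // e ∈ E} → ℝ)
    (hmeas : ∀ e, Measurable fun ω => X ω e)
    (hindep : iIndepFun (fun e ω => X ω e) μ)
    (f : {e : Fin n × Fin n // e ∈ E} → ℝ → ENNReal)
    (hdens : ∀ e, Measure.map (fun ω => X ω e) μ = volume.withDensity (f e))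
    (hbound : ∀ e y, f e y ≤ ENNReal.ofReal φ)
    (δ : ℝ) (hδ : δ = 1 / (2 * n ^ 2 * E.card * φ)) :
    μ {ω | ∃ C : Finset {e : Fin n × Fin n // e ∈ E}, IsCycle E C ∧
        ∀ r' : {e : Fin n × Fin n // e ∈ E} → ℝ,
          (∑ e, |X ω e - r' e|) ≤ δ → r' ∈ Pcell E C} ≥
      1 - (n : ENNReal)⁻¹ := by
  have hδ₀ : 0 ≤ δ := hδ ▸ by positivity
  have hm : 0 < E.card := card_pos.mpr ⟨_, (hout ⟨0, hn⟩).choose_spec⟩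
  let Critical (e : E) : Set Ω := X ⁻¹' {r | IsCriticalEdge E δ e r}
  have hgood : (⋃ e, Critical e)ᶜ ⊆ {ω | ∃ C, IsCycle E C ∧
      ∀ r', ∑ e, |X ω e - r' e| ≤ δ → r' ∈ Pcell E C} := fun ω hω =>
    exists_forall_mem_Pcell_of_forall_not_isCriticalEdge (exists_isCycle hn hout)
      (by simpa [Critical] using hω)
  have hbad (e : E) : μ (Critical e) ≤ ENNReal.ofReal φ * ENNReal.ofReal (2 * δ * n) :=
    measure_preimage_le_of_density_le_of_ediam_le hmeas hindep (hdens e) (hbound e)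
      (measurableSet_isCriticalEdge δ e) (ediam_setOf_isCriticalEdge_update_le hδ₀ e)
  have hsum : ∑ _e : E, ENNReal.ofReal φ * ENNReal.ofReal (2 * δ * n) = (n : ENNReal)⁻¹ := by
    rw [sum_const, card_univ, Fintype.card_coe, nsmul_eq_mul, ← ENNReal.ofReal_mul hφ.le,
      ← ENNReal.ofReal_natCast, ← ENNReal.ofReal_mul (by positivity), hδ,
      ← ENNReal.ofReal_natCast n, ← ENNReal.ofReal_inv_of_pos (by positivity)]
    congr 1
    field_simp
  calc 1 - (n : ENNReal)⁻¹ ≤ 1 - μ (⋃ e, Critical e) :=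
        tsub_le_tsub_left ((measure_iUnion_fintype_le μ Critical).trans
          ((sum_le_sum fun e _ => hbad e).trans_eq hsum)) 1
    _ ≤ μ (⋃ e, Critical e)ᶜ := by
        rw [tsub_le_iff_left, ← measure_univ (μ := μ)]
        exact measure_univ_le_add_compl _
    _ ≤ _ := measure_mono hgood

open ProbabilityTheory in
/-- In the random model, with `δ := 1/(2n²mφ)`, with probability at least
`1 - 1/n` the closed `ℓ₁`-ball of radius `δ` around the random weights is contained in a
single cell `P^C`. -/
theorem stmt3 (n : ℕ) (hn : 0 < n) (E : Finset (Fin n × Fin n))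
    (hsc : StronglyConnected E) (hout : ∀ i : Fin n, ∃ j : Fin n, (i, j) ∈ E)
    (φ : ℝ) (hφ : 0 < φ)
    (Ω : Type*) [MeasurableSpace Ω] (μ : Measure Ω) [IsProbabilityMeasure μ]
    (X : Ω → {e : Fin n × Fin n // e ∈ E} → ℝ)
    (hmeas : ∀ e, Measurable fun ω => X ω e)
    (hindep : iIndepFun (fun e ω => X ω e) μ)
    (f : {e : Fin n × Fin n // e ∈ E} → ℝ → ENNReal)
    (hdens : ∀ e, Measure.map (fun ω => X ω e) μ = volume.withDensity (f e))
    (hbound : ∀ e y, f e y ≤ ENNReal.ofReal φ)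
    (δ : ℝ) (hδ : δ = 1 / (2 * n ^ 2 * E.card * φ)) :
    μ {ω | ∃ C : Finset {e : Fin n × Fin n // e ∈ E}, IsCycle E C ∧
        ∀ r' : {e : Fin n × Fin n // e ∈ E} → ℝ,
          (∑ e, |X ω e - r' e|) ≤ δ → r' ∈ Pcell E C} ≥
      1 - (n : ENNReal)⁻¹ :=
  stmt3_general n hn E hout φ hφ Ω μ X hmeas hindep f hdens hbound δ hδ
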